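/- Let K: C_*(Δⁿ-based complexes) → D be a chain homotopy between a composite chain map g∘σ_# and a map λ_σ, i.e., ∂K − (-1)^{-χd+1} K∂ = g σ_# − λ_σ for each singular simplex σ. Define K'(σ) = (-1)^{-χd+1} K(μ_{Δⁿ}) on generators σ: Δⁿ → X and extend linearly, where μ_{Δⁿ} is the identity n-simplex. If λ(σ) := λ_σ(μ_{Δⁿ}) and g̃(σ) := g(σ_#(μ_{Δⁿ})) = g(σ), then K' satisfies K'∂ = (-1)^{-χd+1} ∂K' − g̃ + λ; i.e., K' is a chain homotopy between λ and g̃. -/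

import Mathlib

/-!
Evaluating the global homotopy on a generator `σ` reduces everything to the universal simplex:
`K' ∂σ` is `±K_σ(∂μ)` because `K` commutes with the face pushforwards, and the simplex-wise
homotopy relation at `μ`, multiplied by the sign `ε = (-1)^(χd+1)` (with `ε² = 1`), is the
required identity.
-/

theorem zsmul_eq_of_sub_zsmul_eq {N F : Type*} [AddCommGroup N] [FunLike F N N]
    [AddMonoidHomClass F N N]
    (δ : F) {ε : ℤ} (hε : ε * ε = 1) {a b c e : N} (h : δ a - ε • b = c - e) :
    ε • b = ε • δ (ε • a) - c + e := by
  rw [map_zsmul, smul_smul, hε, one_smul, sub_add, ← h]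
  abel

theorem sum_zsmul_zsmul_comp_apply {R M M' N ι : Type*} [Semiring R] [Fintype ι]
    [AddCommGroup M] [Module R M] [AddCommGroup M'] [Module R M'] [AddCommGroup N] [Module R N]
    (f : M' →ₗ[R] N) (p : ι → M →ₗ[R] M') (c : ι → ℤ) (ε : ℤ) (x : M) :
    ∑ i, c i • ε • (f ∘ₗ p i) x = ε • f (∑ i, c i • p i x) := by
  simp only [map_sum, map_zsmul, Finset.smul_sum, LinearMap.comp_apply]
  exact Finset.sum_congr rfl fun i _ => smul_comm _ _ _

/-- Assembling simplex-wise chain homotopies into a global chain homotopy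
(over a field `R`).  Here `S n` is the set of singular `n`-simplices `σ : Δⁿ → X` with
face maps `face n i σ = σ ∘ ∂_i`; `T n` abstracts the chain complex `C_*(Δⁿ)` with
differential `dT n`, fundamental chain `μ n = μ_{Δⁿ}` (the identity `n`-simplex), and
pushforwards `push n i = (∂_i)_# : C_*(Δⁿ) → C_*(Δ^{n+1})`, so that
`∂ μ_{Δ^{n+1}} = ∑_i (-1)^i (∂_i)_# μ_{Δⁿ}` (`hμ`).  For each simplex `σ`,
`K n σ : C_*(Δⁿ) → D` is a chain homotopy between `g σ_#` and `λ_σ`: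
`∂K − (-1)^{-χd+1} K ∂ = g σ_# − λ_σ` (`hK`), compatibly with faces (`hcompat`).
Defining `K'(σ) = (-1)^{-χd+1} K_σ(μ_{Δⁿ})`, `g̃(σ) = g(σ_# μ) = g(σ)`,
`λ(σ) = λ_σ(μ)`, we get `K' ∂ = (-1)^{-χd+1} ∂ K' − g̃ + λ` on generators, i.e. `K'` is
a chain homotopy between `λ` and `g̃`. -/
theorem stmt11 (R : Type*) [Field R]
    (S : ℕ → Type*)
    (face : ∀ n, Fin (n + 2) → S (n + 1) → S n)
    (T : ℕ → Type*) [∀ n, AddCommGroup (T n)] [∀ n, Module R (T n)]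
    (dT : ∀ n, T n →ₗ[R] T n)
    (μ : ∀ n, T n)
    (push : ∀ n, Fin (n + 2) → (T n →ₗ[R] T (n + 1)))
    (D : Type*) [AddCommGroup D] [Module R D] (dD : D →ₗ[R] D)
    (χ d : ℕ)
    (K g lam : ∀ n, S n → (T n →ₗ[R] D))
    (hμ : ∀ n, dT (n + 1) (μ (n + 1)) =
      ∑ i : Fin (n + 2), ((-1 : ℤ) ^ (i : ℕ)) • push n i (μ n))
    (hK : ∀ n (σ : S n) (x : T n),
      dD (K n σ x) - ((-1 : ℤ) ^ (χ * d + 1)) • K n σ (dT n x) = g n σ x - lam n σ x)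
    (hcompat : ∀ n (i : Fin (n + 2)) (σ : S (n + 1)),
      K n (face n i σ) = (K (n + 1) σ) ∘ₗ (push n i)) :
    ∀ n (σ : S (n + 1)),
      (∑ i : Fin (n + 2), ((-1 : ℤ) ^ (i : ℕ)) •
          (((-1 : ℤ) ^ (χ * d + 1)) • K n (face n i σ) (μ n))) =
        ((-1 : ℤ) ^ (χ * d + 1)) •
            dD (((-1 : ℤ) ^ (χ * d + 1)) • K (n + 1) σ (μ (n + 1))) -
          g (n + 1) σ (μ (n + 1)) + lam (n + 1) σ (μ (n + 1)) := by
  intro n σ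
  have hsign : (-1 : ℤ) ^ (χ * d + 1) * (-1) ^ (χ * d + 1) = 1 :=
    pow_mul_pow_eq_one _ (by norm_num)
  simp only [hcompat n _ σ]
  rw [sum_zsmul_zsmul_comp_apply, ← hμ n]
  exact zsmul_eq_of_sub_zsmul_eq dD hsign (hK (n + 1) σ (μ (n + 1)))
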